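/- arXiv:1705.05098 — 3 statements merged into one kernel-verified Lean document; each statement's English description precedes it below -/
import Mathlib

section
/- Let f(x) = e^x/(1+e^x) be the logistic sigmoid. For real cut-points c_k < c_{k+1} and a real latent rating v, define P(k) = ∏_{q<k}(1 - f(c_q - v)) · f(c_k - v) and P(k+1) = ∏_{q<k}(1 - f(c_q - v)) · (1 - f(c_k - v)) · f(c_{k+1} - v). If v > c_k - ln(1 - e^{-(c_{k+1}-c_k)}), then P(k+1) > P(k). -/
noncomputable def sigmoid (x : ℝ) : ℝ := Real.exp x / (1 + Real.exp x)

/-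
Write `a = c k - v` and `b = c (k + 1) - v`. After cancelling the positive prefix product and
the denominators `1 + exp a`, `1 + exp b`, the inequality `P(k) < P(k+1)` becomes
`exp a * (1 + exp b) < exp b`, i.e. `exp a + exp (a - b) < 1`. Since `a - b = -(c (k + 1) - c k)`,
this says `exp a < 1 - exp (-(c (k + 1) - c k))`, which is the hypothesis on `v` exponentiated.
-/

theorem sigmoid_lt_one (x : ℝ) : sigmoid x < 1 := by
  rw [sigmoid, div_lt_one (by positivity)]
  linarith

theorem one_sub_sigmoid (x : ℝ) : 1 - sigmoid x = 1 / (1 + Real.exp x) := by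
  rw [sigmoid]
  field_simp
  ring

theorem sigmoid_lt_one_sub_sigmoid_mul_sigmoid_iff (a b : ℝ) :
    sigmoid a < (1 - sigmoid a) * sigmoid b ↔ Real.exp a + Real.exp (a - b) < 1 := by
  have hb : 0 < Real.exp b := Real.exp_pos b
  calc sigmoid a < (1 - sigmoid a) * sigmoid b
      ↔ Real.exp a * (1 + Real.exp b) < Real.exp b := by
        rw [one_sub_sigmoid, sigmoid, sigmoid, div_mul_div_comm, one_mul,
          div_lt_div_iff₀ (by positivity) (by positivity), mul_comm (1 + Real.exp a),
          ← mul_assoc, mul_lt_mul_iff_left₀ (by positivity)]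
    _ ↔ (Real.exp a + Real.exp (a - b)) * Real.exp b < 1 * Real.exp b := by
        rw [Real.exp_sub, add_mul, div_mul_cancel₀ _ hb.ne', one_mul, mul_one_add, add_comm]
    _ ↔ Real.exp a + Real.exp (a - b) < 1 := mul_lt_mul_iff_left₀ hb

/-- Cut-point ordering lemma: if `v > c k - ln(1 - e^{-(c (k+1) - c k)})` then
`P(k+1) > P(k)` for the logistic stick-breaking probabilities. -/
theorem stmt_0 (c : ℕ → ℝ) (k : ℕ) (v : ℝ) (hc : c k < c (k + 1))
    (hv : v > c k - Real.log (1 - Real.exp (-(c (k + 1) - c k)))) :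
    (∏ q ∈ Finset.range k, (1 - sigmoid (c q - v))) *
        ((1 - sigmoid (c k - v)) * sigmoid (c (k + 1) - v)) >
      (∏ q ∈ Finset.range k, (1 - sigmoid (c q - v))) * sigmoid (c k - v) := by
  have hgap : 0 < 1 - Real.exp (-(c (k + 1) - c k)) :=
    sub_pos.2 (Real.exp_lt_one_iff.2 (by linarith))
  have hprefix : 0 < ∏ q ∈ Finset.range k, (1 - sigmoid (c q - v)) :=
    Finset.prod_pos fun q _ => sub_pos.2 (sigmoid_lt_one _)
  have hexp : Real.exp (c k - v) < 1 - Real.exp (-(c (k + 1) - c k)) :=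
    (Real.lt_log_iff_exp_lt hgap).1 (by linarith)
  refine mul_lt_mul_of_pos_left ?_ hprefix
  rw [sigmoid_lt_one_sub_sigmoid_mul_sigmoid_iff,
    show c k - v - (c (k + 1) - v) = -(c (k + 1) - c k) by ring]
  linarith
end

section
/- Let f(x) = e^x/(1+e^x) and let c_1 < ... < c_{K-1} be real cut-points. For 1 ≤ k-1 < k < K, if v is a real number satisfying c_{k-1} - ln(1 - e^{-(c_k - c_{k-1})}) < v ≤ c_k - ln(1 - e^{-(c_{k+1} - c_k)}), then P(k) ≥ P(k+1) and P(k) > P(k-1), where P(j) = ∏_{q<j}(1 - f(c_q - v))·f(c_j - v) for j < K. -/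
/-!
Category `j` has probability `(∏_{q<j} (1 - σ q)) * σ j`, so neighbouring categories share
the prefix product and comparing them comes down to comparing `(1 - σ a) * σ (a + d)` with
`σ a`, where `a` is a shifted cut-point and `d > 0` the gap to the next one. Since
`σ a = exp a * (1 - σ a)`, this is the comparison of `σ (a + d)` with `exp a`, which after
clearing denominators reads `1 - exp (-d) ≤ exp a`, i.e. `log (1 - exp (-d)) ≤ a`.
The two bounds on `v` are exactly these conditions at the cut-points `k` and `k - 1`.
-/

theorem sigmoid_eq_real_sigmoid : sigmoid = Real.sigmoid := by
  funext x
  rw [sigmoid, Real.sigmoid_def, Real.exp_neg]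
  field_simp
  ring

namespace Real

theorem one_sub_sigmoid_pos (x : ℝ) : 0 < 1 - sigmoid x := by
  rw [← sigmoid_neg]; exact sigmoid_pos _

theorem one_sub_sigmoid_mul_le_sigmoid_iff (a y : ℝ) :
    (1 - sigmoid a) * y ≤ sigmoid a ↔ y ≤ exp a := by
  have h : (1 - sigmoid a) * exp a = sigmoid a := by
    simpa only [neg_neg, sigmoid_neg] using sigmoid_mul_rexp_neg (-a)
  simpa only [h] using mul_le_mul_iff_of_pos_left (one_sub_sigmoid_pos a) (b := y) (c := exp a)

theorem sigmoid_add_le_exp_iff (a d : ℝ) : sigmoid (a + d) ≤ exp a ↔ 1 - exp (-d) ≤ exp a := by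
  rw [sigmoid_def, inv_le_iff_one_le_mul₀ (by positivity), mul_add, mul_one, ← exp_add, neg_add,
    add_neg_cancel_left, sub_le_iff_le_add]

theorem one_sub_sigmoid_mul_sigmoid_add_le_iff {d : ℝ} (a : ℝ) (hd : 0 < d) :
    (1 - sigmoid a) * sigmoid (a + d) ≤ sigmoid a ↔ log (1 - exp (-d)) ≤ a := by
  have hgap : 0 < 1 - exp (-d) := sub_pos.2 (exp_lt_one_iff.2 (neg_lt_zero.2 hd))
  rw [one_sub_sigmoid_mul_le_sigmoid_iff, sigmoid_add_le_exp_iff, log_le_iff_le_exp hgap]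

theorem sigmoid_lt_one_sub_sigmoid_mul_sigmoid_add_iff {d : ℝ} (a : ℝ) (hd : 0 < d) :
    sigmoid a < (1 - sigmoid a) * sigmoid (a + d) ↔ a < log (1 - exp (-d)) := by
  simpa only [not_le] using (one_sub_sigmoid_mul_sigmoid_add_le_iff a hd).not

end Real

open Finset

def stickBreaking (p : ℕ → ℝ) (j : ℕ) : ℝ := (∏ q ∈ range j, (1 - p q)) * p j

section StickBreaking

variable {p : ℕ → ℝ} {j : ℕ}

theorem stickBreaking_succ :
    stickBreaking p (j + 1) = (∏ q ∈ range j, (1 - p q)) * ((1 - p j) * p (j + 1)) := by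
  rw [stickBreaking, prod_range_succ, mul_assoc]

theorem prod_range_one_sub_pos (hp : ∀ q, p q < 1) : 0 < ∏ q ∈ range j, (1 - p q) :=
  prod_pos fun q _ => sub_pos.2 (hp q)

theorem stickBreaking_succ_le_iff (hp : ∀ q, p q < 1) :
    stickBreaking p (j + 1) ≤ stickBreaking p j ↔ (1 - p j) * p (j + 1) ≤ p j := by
  rw [stickBreaking_succ, stickBreaking, mul_le_mul_iff_of_pos_left (prod_range_one_sub_pos hp)]

theorem stickBreaking_lt_succ_iff (hp : ∀ q, p q < 1) :
    stickBreaking p j < stickBreaking p (j + 1) ↔ p j < (1 - p j) * p (j + 1) := by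
  rw [stickBreaking_succ, stickBreaking, mul_lt_mul_iff_of_pos_left (prod_range_one_sub_pos hp)]

end StickBreaking

theorem stmt_6_general (c : ℕ → ℝ) (k : ℕ) (v : ℝ) (P : ℕ → ℝ)
    (hk1 : 1 ≤ k)
    (hc1 : c (k - 1) < c k) (hc2 : c k < c (k + 1))
    (hP : ∀ j, P j = (∏ q ∈ Finset.range j, (1 - sigmoid (c q - v))) * sigmoid (c j - v))
    (hv1 : c (k - 1) - Real.log (1 - Real.exp (-(c k - c (k - 1)))) < v)
    (hv2 : v ≤ c k - Real.log (1 - Real.exp (-(c (k + 1) - c k)))) :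
    P k ≥ P (k + 1) ∧ P k > P (k - 1) := by
  rw [sigmoid_eq_real_sigmoid] at hP
  have hPeq : P = stickBreaking (fun q => Real.sigmoid (c q - v)) := funext hP
  have hp : ∀ q, Real.sigmoid (c q - v) < 1 := fun q => Real.sigmoid_lt_one _
  have hshift : ∀ i j, c j - v = (c i - v) + (c j - c i) := fun _ _ => by ring
  obtain ⟨m, rfl⟩ : ∃ m, k = m + 1 := ⟨k - 1, by omega⟩
  rw [Nat.add_sub_cancel] at hc1 hv1 ⊢
  subst hPeq
  constructor
  · rw [ge_iff_le, stickBreaking_succ_le_iff hp, hshift (m + 1) (m + 1 + 1),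
      Real.one_sub_sigmoid_mul_sigmoid_add_le_iff _ (sub_pos.2 hc2)]
    linarith
  · rw [gt_iff_lt, stickBreaking_lt_succ_iff hp, hshift m (m + 1),
      Real.sigmoid_lt_one_sub_sigmoid_mul_sigmoid_add_iff _ (sub_pos.2 hc1)]
    linarith

/-- If `v` lies in the stated interval then category `k` is at least as likely
as category `k+1` and strictly more likely than category `k-1`. -/
theorem stmt_6 (c : ℕ → ℝ) (K k : ℕ) (v : ℝ) (P : ℕ → ℝ)
    (hk1 : 1 ≤ k) (hkK : k + 1 < K)
    (hc1 : c (k - 1) < c k) (hc2 : c k < c (k + 1))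
    (hP : ∀ j, P j = (∏ q ∈ Finset.range j, (1 - sigmoid (c q - v))) * sigmoid (c j - v))
    (hv1 : c (k - 1) - Real.log (1 - Real.exp (-(c k - c (k - 1)))) < v)
    (hv2 : v ≤ c k - Real.log (1 - Real.exp (-(c (k + 1) - c k)))) :
    P k ≥ P (k + 1) ∧ P k > P (k - 1) :=
  stmt_6_general c k v P hk1 hc1 hc2 hP hv1 hv2
end

section
/- Let f(x)=e^x/(1+e^x), and let c_1 < ... < c_{K-1} with thresholds t_k = c_k - ln(1 - e^{-(c_{k+1}-c_k)}) for 1 ≤ k ≤ K-2. Assume t_1 < t_2 < ... < t_{K-2}. If v ∈ (t_{k-1}, t_k) for some 2 ≤ k ≤ K-2, then for all j ≠ k with 1 ≤ j ≤ K-1: P(k) > P(j), where P(j) denotes the stick-breaking probability of category j. -/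
/-- Global argmax: if the thresholds `t` are increasing and `v ∈ (t (k-1), t k)`,
then category `k` maximizes the stick-breaking probability among `1,…,K-1`. -/
theorem stmt_19 (K k : ℕ) (c t : ℕ → ℝ) (v : ℝ) (P : ℕ → ℝ)
    (hc : ∀ i, 1 ≤ i → i + 1 ≤ K - 1 → c i < c (i + 1))
    (ht : ∀ i, 1 ≤ i → i ≤ K - 2 →
      t i = c i - Real.log (1 - Real.exp (-(c (i + 1) - c i))))
    (htmono : ∀ i, 1 ≤ i → i + 1 ≤ K - 2 → t i < t (i + 1))
    (hP : ∀ j, P j = (∏ q ∈ Finset.Ico 1 j, (1 - sigmoid (c q - v))) * sigmoid (c j - v))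
    (hk1 : 2 ≤ k) (hk2 : k ≤ K - 2)
    (hv1 : t (k - 1) < v) (hv2 : v < t k) :
    ∀ j, 1 ≤ j → j ≤ K - 1 → j ≠ k → P k > P j := by
  have hK : 4 ≤ K := by omega
  have hsig : ∀ x : ℝ, 0 < sigmoid x ∧ sigmoid x < 1 := by
    intro x
    have h1 : 0 < Real.exp x := Real.exp_pos x
    simp only [sigmoid]
    constructor
    · exact div_pos h1 (by linarith)
    · rw [div_lt_one (by linarith)]; linarith
  -- step lemma
  have step : ∀ j, 1 ≤ j → j ≤ K - 2 →
      ((t j < v → P j < P (j+1)) ∧ (v < t j → P (j+1) < P j)) := by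
    intro j hj1 hj2
    have hcj : c j < c (j+1) := hc j hj1 (by omega)
    have htj : t j = c j - Real.log (1 - Real.exp (-(c (j + 1) - c j))) := ht j hj1 hj2
    set d := c (j+1) - c j with hd
    have hd0 : 0 < d := by simp only [hd]; linarith
    have hed : 1 < Real.exp d := by
      have := Real.exp_lt_exp.mpr hd0; simpa using this
    have hlog : Real.log (1 - Real.exp (-d)) = Real.log (Real.exp d - 1) - d := by
      have hev : 1 - Real.exp (-d) = (Real.exp d - 1) * Real.exp (-d) := by
        rw [sub_mul, ← Real.exp_add]
        simp
      rw [hev, Real.log_mul (by linarith) (Real.exp_ne_zero _), Real.log_exp]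
      ring
    have htj' : t j = c (j+1) - Real.log (Real.exp d - 1) := by
      rw [htj, hlog]; simp only [hd]; ring
    set A := Real.exp (c j - v) with hAdef
    set B := Real.exp (c (j+1) - v) with hBdef
    have hA : 0 < A := Real.exp_pos _
    have hB : 0 < B := Real.exp_pos _
    have hAB : B = A * Real.exp d := by
      rw [hAdef, hBdef, ← Real.exp_add]
      congr 1
      simp only [hd]; ring
    -- product positivity
    have hQpos : 0 < ∏ q ∈ Finset.Ico 1 j, (1 - sigmoid (c q - v)) := by
      apply Finset.prod_pos
      intro q _
      have := (hsig (c q - v)).2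
      linarith
    have hprod : P (j+1) = (∏ q ∈ Finset.Ico 1 j, (1 - sigmoid (c q - v))) *
        ((1 - sigmoid (c j - v)) * sigmoid (c (j+1) - v)) := by
      rw [hP, Finset.prod_Ico_succ_top hj1]
      ring
    have hdiff : P (j+1) - P j = (∏ q ∈ Finset.Ico 1 j, (1 - sigmoid (c q - v))) *
        ((B - A - A * B) / ((1 + A) * (1 + B))) := by
      rw [hprod, hP]
      have : (1 - sigmoid (c j - v)) * sigmoid (c (j+1) - v) - sigmoid (c j - v)
          = (B - A - A * B) / ((1 + A) * (1 + B)) := by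
        simp only [sigmoid, ← hAdef, ← hBdef]
        field_simp
        ring
      rw [← mul_sub, this]
    constructor
    · intro hlt
      have h1 : c (j+1) - v < Real.log (Real.exp d - 1) := by
        rw [htj'] at hlt; linarith
      have h2 : B < Real.exp d - 1 := by
        rw [hBdef]
        calc Real.exp (c (j+1) - v) < Real.exp (Real.log (Real.exp d - 1)) :=
              Real.exp_lt_exp.mpr h1
          _ = Real.exp d - 1 := Real.exp_log (by linarith)
      have hN : 0 < B - A - A * B := by nlinarith [hAB, hA, hB]
      have : 0 < P (j+1) - P j := by
        rw [hdiff]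
        positivity
      linarith
    · intro hlt
      have h1 : Real.log (Real.exp d - 1) < c (j+1) - v := by
        rw [htj'] at hlt; linarith
      have h2 : Real.exp d - 1 < B := by
        rw [hBdef]
        calc Real.exp d - 1 = Real.exp (Real.log (Real.exp d - 1)) :=
              (Real.exp_log (by linarith)).symm
          _ < Real.exp (c (j+1) - v) := Real.exp_lt_exp.mpr h1
      have hN : B - A - A * B < 0 := by nlinarith [hAB, hA, hB]
      have : P (j+1) - P j < 0 := by
        rw [hdiff]
        apply mul_neg_of_pos_of_neg hQpos
        apply div_neg_of_neg_of_pos hN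
        positivity
      linarith
  -- threshold monotonicity
  have tmono : ∀ m : ℕ, ∀ i, 1 ≤ i → i + m ≤ K - 2 → t i ≤ t (i + m) := by
    intro m
    induction m with
    | zero => intro i _ _; simp
    | succ n ih =>
      intro i hi h2
      have h3 : t i ≤ t (i + n) := ih i hi (by omega)
      have h4 : t (i + n) < t (i + n + 1) := htmono (i + n) (by omega) (by omega)
      have : i + (n + 1) = i + n + 1 := by omega
      rw [this]
      linarith
  have incr : ∀ j, 1 ≤ j → j < k → P j < P (j+1) := by
    intro j hj hjk
    apply (step j hj (by omega)).1
    have h1 : t j ≤ t (k - 1) := by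
      have := tmono (k - 1 - j) j hj (by omega)
      have he : j + (k - 1 - j) = k - 1 := by omega
      rwa [he] at this
    linarith
  have decr : ∀ j, k ≤ j → j ≤ K - 2 → P (j+1) < P j := by
    intro j h1 h2
    apply (step j (by omega) h2).2
    have h3 : t k ≤ t j := by
      have := tmono (j - k) k (by omega) (by omega)
      have he : k + (j - k) = j := by omega
      rwa [he] at this
    linarith
  have main_up : ∀ m : ℕ, ∀ j, 1 ≤ j → j + m = k → 1 ≤ m → P j < P k := by
    intro m
    induction m with
    | zero => intro j _ _ h; omega
    | succ n ih =>
      intro j hj hjm _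
      have h1 : P j < P (j+1) := incr j hj (by omega)
      rcases Nat.eq_zero_or_pos n with h | h
      · have : j + 1 = k := by omega
        rwa [this] at h1
      · exact h1.trans (ih (j+1) (by omega) (by omega) h)
  have main_down : ∀ m : ℕ, ∀ j, j = k + m → j ≤ K - 1 → 1 ≤ m → P j < P k := by
    intro m
    induction m with
    | zero => intro j _ _ h; omega
    | succ n ih =>
      intro j hjm hjK _
      have h1 : P (k + n + 1) < P (k + n) := decr (k + n) (by omega) (by omega)
      rcases Nat.eq_zero_or_pos n with h | h
      · subst hjm
        simp only [h] at h1 ⊢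
        simpa using h1
      · have h2 : P (k + n) < P k := ih (k + n) rfl (by omega) h
        have : j = k + n + 1 := by omega
        rw [this]
        linarith
  intro j h1 h2 hne
  rcases lt_or_gt_of_ne hne with h | h
  · exact main_up (k - j) j h1 (by omega) (by omega)
  · exact main_down (j - k) j (by omega) h2 (by omega)
end
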